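/- arXiv:1604.04162 — 3 statements merged into one kernel-verified Lean document; each statement's English description precedes it below -/
import Mathlib

section
/- Let G be a group and let A, B be commensurated subgroups of G such that A normalizes B. Then the product AB is a commensurated subgroup of G. -/
/-!
If `A` normalizes `B` then `A ⊔ B = A * B`, and the same holds for the conjugates
`A' = gAg⁻¹`, `B' = gBg⁻¹`. The subgroup `(A' ⊓ A) ⊔ (B' ⊓ B)` lies in both `A ⊔ B` and
`A' ⊔ B'`, and it has finite index in each: passing from `A₀ ⊔ B₀` to `A₀ ⊔ B` and then to
`A ⊔ B` costs at most the indices of `B₀` in `B` and of `A₀` in `A`, because `A ⊔ B` is covered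
by `A` times `A₀ ⊔ B` and `A₀ ⊔ B` by `B` times `A₀ ⊔ B₀`.
-/

open scoped Pointwise

/-- The conjugate subgroup `gHg⁻¹`. -/
def conjS {G : Type*} [Group G] (g : G) (H : Subgroup G) : Subgroup G :=
  H.map (MulAut.conj g).toMonoidHom

/-- `H` is commensurated: for every `g`, `gHg⁻¹ ∩ H` has finite index in both
`H` and `gHg⁻¹`. -/
def Commensurated {G : Type*} [Group G] (H : Subgroup G) : Prop :=
  ∀ g : G, (conjS g H ⊓ H).relIndex H ≠ 0 ∧ (conjS g H ⊓ H).relIndex (conjS g H) ≠ 0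

namespace Subgroup

variable {G : Type*} [Group G]

theorem relIndex_eq_of_le_of_subset_mul {H K L : Subgroup G} (hLK : L ≤ K)
    (hK : (K : Set G) ⊆ (L : Set G) * (H : Set G)) :
    H.relIndex K = H.relIndex L := by
  let e := quotientSubgroupOfEmbeddingOfLE H hLK
  have he : Function.Surjective e := by
    rintro ⟨x⟩
    obtain ⟨l, hl, h, hh, hlh⟩ := hK x.2
    refine ⟨QuotientGroup.mk ⟨l, hl⟩, QuotientGroup.eq.mpr ?_⟩
    simpa [mem_subgroupOf, ← hlh] using hh
  exact (Nat.card_congr (Equiv.ofBijective e ⟨e.injective, he⟩)).symm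

theorem relIndex_sup_sup_ne_zero {A B A₀ B₀ : Subgroup G} (hnorm : A ≤ normalizer (B : Set G))
    (hA₀ : A₀ ≤ A) (hA : A₀.relIndex A ≠ 0) (hB : B₀.relIndex B ≠ 0) :
    (A₀ ⊔ B₀).relIndex (A ⊔ B) ≠ 0 := by
  have hA₀B : (A₀ ⊔ B).relIndex (A ⊔ B) ≠ 0 := by
    rw [relIndex_eq_of_le_of_subset_mul le_sup_left]
    · exact ne_zero_of_dvd_ne_zero hA (relIndex_dvd_of_le_left A le_sup_left)
    · rw [coe_mul_of_left_le_normalizer_right A B hnorm]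
      exact Set.mul_subset_mul_left (le_sup_right : B ≤ A₀ ⊔ B)
  have hA₀B₀ : (A₀ ⊔ B₀).relIndex (A₀ ⊔ B) ≠ 0 := by
    rw [relIndex_eq_of_le_of_subset_mul le_sup_right]
    · exact ne_zero_of_dvd_ne_zero hB (relIndex_dvd_of_le_left B le_sup_right)
    · rw [sup_comm, coe_mul_of_right_le_normalizer_left B A₀ (hA₀.trans hnorm)]
      exact Set.mul_subset_mul_left (le_sup_left : A₀ ≤ A₀ ⊔ B₀)
  exact relIndex_ne_zero_trans hA₀B₀ hA₀B

end Subgroup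

section Commensurated

open Subgroup

variable {G : Type*} [Group G]

theorem conjS_sup (g : G) (A B : Subgroup G) :
    conjS g (A ⊔ B) = conjS g A ⊔ conjS g B :=
  map_sup A B _

theorem conjS_le_normalizer_conjS {g : G} {A B : Subgroup G}
    (hnorm : A ≤ normalizer (B : Set G)) :
    conjS g A ≤ normalizer (conjS g B : Set G) :=
  (map_mono hnorm).trans (le_normalizer_map _)

theorem Commensurated.sup {A B : Subgroup G} (hA : Commensurated A) (hB : Commensurated B)
    (hnorm : A ≤ normalizer (B : Set G)) : Commensurated (A ⊔ B) := by
  intro g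
  have hle : (conjS g A ⊓ A) ⊔ (conjS g B ⊓ B) ≤ conjS g (A ⊔ B) ⊓ (A ⊔ B) := by
    rw [conjS_sup]
    exact sup_le (inf_le_inf le_sup_left le_sup_left) (inf_le_inf le_sup_right le_sup_right)
  refine ⟨mt (relIndex_eq_zero_of_le_left hle) ?_, mt (relIndex_eq_zero_of_le_left hle) ?_⟩
  · exact relIndex_sup_sup_ne_zero hnorm inf_le_right (hA g).1 (hB g).1
  · rw [conjS_sup]
    exact relIndex_sup_sup_ne_zero (conjS_le_normalizer_conjS hnorm) inf_le_left (hA g).2 (hB g).2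

end Commensurated

theorem stmt_0 {G : Type*} [Group G] (A B : Subgroup G)
    (hA : Commensurated A) (hB : Commensurated B)
    (hnorm : A ≤ Subgroup.normalizer (B : Set G)) :
    ((A ⊔ B : Subgroup G) : Set G) = (A : Set G) * (B : Set G) ∧
      Commensurated (A ⊔ B) :=
  ⟨Subgroup.coe_mul_of_left_le_normalizer_right A B hnorm, hA.sup hB hnorm⟩
end

section
/- Conversely, if there exists a subgroup N of G commensurable with H that is normalized by a subgroup K, then sup_{k∈K} |H : H ∩ kHk⁻¹| is finite. -/
/-!
If `k` normalizes `N`, conjugation by `k` carries the pair `(H, N)` to `(kHk⁻¹, N)` and so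
preserves the relative indices: `|N : kHk⁻¹ ∩ N| = |N : H ∩ N|`. Passing through `N`, the index
of `H ∩ kHk⁻¹` in `H` is then at most `|N : H ∩ N| · |H : H ∩ N|`, a bound independent of `k`.
-/

namespace Subgroup

variable {G : Type*} [Group G]

theorem relIndex_le_relIndex_mul_relIndex {H K L : Subgroup G} (hHK : H.relIndex K ≠ 0)
    (hKL : K.relIndex L ≠ 0) : H.relIndex L ≤ H.relIndex K * K.relIndex L := by
  have hHKL : (H ⊓ K).relIndex L ≠ 0 := by
    rw [← relIndex_inf_mul_relIndex]
    exact mul_ne_zero (mt (relIndex_eq_zero_of_le_right inf_le_left) hHK) hKL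
  calc H.relIndex L ≤ (H ⊓ K).relIndex L := relIndex_le_of_le_left inf_le_left hHKL
    _ = H.relIndex (K ⊓ L) * K.relIndex L := (relIndex_inf_mul_relIndex H K L).symm
    _ ≤ H.relIndex K * K.relIndex L :=
        Nat.mul_le_mul_right _ (relIndex_le_of_le_right inf_le_left hHK)

theorem relIndex_conjS_conjS (g : G) (H K : Subgroup G) :
    (conjS g H).relIndex (conjS g K) = H.relIndex K :=
  relIndex_map_map_of_injective H K (MulAut.conj g).injective

theorem relIndex_conjS_of_conjS_eq {g : G} {N : Subgroup G} (hN : conjS g N = N)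
    (H : Subgroup G) : (conjS g H).relIndex N = H.relIndex N := by
  conv_lhs => rw [← hN]
  exact relIndex_conjS_conjS g H N

theorem Commensurable.relIndex_conjS_ne_zero {g : G} {H N : Subgroup G} (hHN : Commensurable H N)
    (hN : conjS g N = N) : (conjS g H).relIndex H ≠ 0 :=
  relIndex_ne_zero_trans ((relIndex_conjS_of_conjS_eq hN H).trans_ne hHN.1) hHN.2

theorem Commensurable.relIndex_conjS_le {g : G} {H N : Subgroup G} (hHN : Commensurable H N)
    (hN : conjS g N = N) : (conjS g H).relIndex H ≤ H.relIndex N * N.relIndex H := by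
  have hkHN := relIndex_conjS_of_conjS_eq hN H
  rw [← hkHN]
  exact relIndex_le_relIndex_mul_relIndex (hkHN.trans_ne hHN.1) hHN.2

end Subgroup

theorem stmt_4 {G : Type*} [Group G] (H K N : Subgroup G)
    (hcomm : Subgroup.Commensurable H N) (hnorm : ∀ k ∈ K, conjS k N = N) :
    ∃ n : ℕ, ∀ k ∈ K,
      0 < (H ⊓ conjS k H).relIndex H ∧ (H ⊓ conjS k H).relIndex H ≤ n := by
  refine ⟨H.relIndex N * N.relIndex H, fun k hk => ?_⟩
  rw [Subgroup.inf_relIndex_left]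
  exact ⟨Nat.pos_of_ne_zero (hcomm.relIndex_conjS_ne_zero (hnorm k hk)),
    hcomm.relIndex_conjS_le (hnorm k hk)⟩
end

section
/- Let G be a locally compact group, H a closed subgroup, and K a compact subgroup of G such that for every k ∈ K the subgroup kHk⁻¹ ∩ H has finite index in both H and kHk⁻¹. Then there is an integer n such that |H : H ∩ kHk⁻¹| ≤ n and |H : H ∩ k⁻¹Hk| ≤ n for all k ∈ K. -/
open Function Subgroup

theorem Nat.card_ne_zero_and_le_iff_forall_not_injective {α : Type*} [Nonempty α] {n : ℕ} :
    Nat.card α ≠ 0 ∧ Nat.card α ≤ n ↔ ∀ f : Fin (n + 1) → α, ¬Injective f := by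
  constructor
  · rintro ⟨hne, hle⟩ f hf
    have := Nat.finite_of_card_ne_zero hne
    have := Nat.card_le_card_of_injective f hf
    simp only [Nat.card_eq_fintype_card, Fintype.card_fin] at this
    omega
  · intro h
    cases finite_or_infinite α with
    | inr hinf => exact absurd ((Infinite.natEmbedding α).injective.comp Fin.val_injective) (h _)
    | inl hfin =>
      refine ⟨Nat.card_pos.ne', not_lt.1 fun hlt => ?_⟩
      have := Fintype.ofFinite α
      obtain ⟨e⟩ : Nonempty (Fin (n + 1) ↪ α) :=
        Function.Embedding.nonempty_of_card_le (by simpa [Nat.card_eq_fintype_card] using hlt)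
      exact h e e.injective

theorem Subgroup.index_ne_zero_and_le_iff {G : Type*} [Group G] (J : Subgroup G) (n : ℕ) :
    J.index ≠ 0 ∧ J.index ≤ n ↔ ∀ f : Fin (n + 1) → G, ∃ i j, i ≠ j ∧ (f i)⁻¹ * f j ∈ J := by
  rw [index, Nat.card_ne_zero_and_le_iff_forall_not_injective]
  constructor
  · intro h f
    obtain ⟨i, j, hij, hne⟩ := not_injective_iff.1 (h ((↑) ∘ f))
    exact ⟨i, j, hne, QuotientGroup.eq.1 hij⟩
  · intro h f hf
    obtain ⟨i, j, hne, hij⟩ := h (Quotient.out ∘ f)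
    refine hne (hf ?_)
    simpa using QuotientGroup.eq.2 hij

section Conjugation

variable {G : Type*} [Group G]

theorem mem_conjS {g x : G} {H : Subgroup G} : x ∈ conjS g H ↔ g⁻¹ * x * g ∈ H := by
  rw [conjS, mem_map_equiv]
  simp [MulAut.conj_symm_apply]

theorem conjS_mul (g g' : G) (H : Subgroup G) : conjS (g * g') H = conjS g (conjS g' H) := by
  simp only [conjS, map_mul, map_map]
  rfl

theorem relIndex_conjS (g : G) (A B : Subgroup G) :
    (conjS g A).relIndex (conjS g B) = A.relIndex B :=
  relIndex_map_map_of_injective A B (MulAut.conj g).injective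

/-- `|H : H ∩ gHg⁻¹|`, with the junk value `0` when this index is infinite. -/
noncomputable def conjIndex (H : Subgroup G) (g : G) : ℕ := (conjS g H).relIndex H

theorem conjIndex_mul_le {H : Subgroup G} {g g' : G} (hg : conjIndex H g ≠ 0)
    (hg' : conjIndex H g' ≠ 0) : conjIndex H (g * g') ≤ conjIndex H g * conjIndex H g' := by
  set A := H ⊓ conjS g H
  set B := conjS (g * g') H with hB_def
  have hAH : A.relIndex H = conjIndex H g := inf_relIndex_left H _
  have hB : B.relIndex (conjS g H) = conjIndex H g' := by
    rw [hB_def, conjS_mul, relIndex_conjS]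
    rfl
  have hBA : B.relIndex A ≤ conjIndex H g' :=
    hB ▸ relIndex_le_of_le_right inf_le_right (hB ▸ hg')
  have hBA_ne : B.relIndex A ≠ 0 := fun h => hg' (hB ▸ relIndex_eq_zero_of_le_right inf_le_right h)
  have hBAH : (B ⊓ A).relIndex H = B.relIndex A * conjIndex H g := by
    rw [← hAH, ← relIndex_inf_mul_relIndex, inf_eq_left.2 inf_le_left]
  calc conjIndex H (g * g') ≤ (B ⊓ A).relIndex H :=
        relIndex_le_of_le_left inf_le_left (hBAH ▸ mul_ne_zero hBA_ne hg)
    _ ≤ conjIndex H g' * conjIndex H g := hBAH ▸ Nat.mul_le_mul_right _ hBA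
    _ = conjIndex H g * conjIndex H g' := mul_comm _ _

theorem conjIndex_ne_zero_and_le_iff (H : Subgroup G) (g : G) (n : ℕ) :
    conjIndex H g ≠ 0 ∧ conjIndex H g ≤ n ↔
      ∀ f : Fin (n + 1) → H, ∃ i j, i ≠ j ∧ g⁻¹ * ((f i : G)⁻¹ * f j) * g ∈ H := by
  simp [conjIndex, relIndex, index_ne_zero_and_le_iff, mem_subgroupOf, mem_conjS]

theorem isClosed_setOf_conjIndex_le [TopologicalSpace G] [IsTopologicalGroup G]
    {H : Subgroup G} (hH : IsClosed (H : Set G)) (n : ℕ) :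
    IsClosed {g : G | conjIndex H g ≠ 0 ∧ conjIndex H g ≤ n} := by
  simp only [conjIndex_ne_zero_and_le_iff, Set.ofPred_forall, Set.ofPred_exists]
  refine isClosed_iInter fun f => isClosed_iUnion_of_finite fun i =>
    isClosed_iUnion_of_finite fun j => ?_
  rw [Set.ofPred_and]
  exact isClosed_const.inter (hH.preimage (by fun_prop))

end Conjugation

theorem exists_forall_le_of_submultiplicative {K : Type*} [Group K] [TopologicalSpace K]
    [IsTopologicalGroup K] [CompactSpace K] (φ : K → ℕ) (hφ : ∀ n, IsClosed {k | φ k ≤ n})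
    (hmul : ∀ a b, φ (a * b) ≤ φ a * φ b) : ∃ N, ∀ k, φ k ≤ N := by
  obtain ⟨n, hn⟩ : ∃ n, (interior {k | φ k ≤ n}).Nonempty :=
    nonempty_interior_of_iUnion_of_closed hφ
      (Set.iUnion_eq_univ_iff.2 fun k => ⟨φ k, (le_rfl : φ k ≤ φ k)⟩)
  obtain ⟨t, ht⟩ := compact_covered_by_mul_left_translates isCompact_univ hn
  refine ⟨t.sup (fun g => φ g⁻¹) * n, fun k => ?_⟩
  obtain ⟨g, hg, hgk⟩ := Set.mem_iUnion₂.1 (ht (Set.mem_univ k))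
  calc φ k = φ (g⁻¹ * (g * k)) := by rw [inv_mul_cancel_left]
    _ ≤ φ g⁻¹ * φ (g * k) := hmul _ _
    _ ≤ t.sup (fun g => φ g⁻¹) * n :=
      Nat.mul_le_mul (Finset.le_sup (f := fun g => φ g⁻¹) hg) hgk

theorem stmt_5_general {G : Type*} [Group G] [TopologicalSpace G] [IsTopologicalGroup G]
    (H K : Subgroup G) (hH : IsClosed (H : Set G)) (hK : IsCompact (K : Set G))
    (hcomm : ∀ k ∈ K, (conjS k H ⊓ H).relIndex H ≠ 0 ∧
      (conjS k H ⊓ H).relIndex (conjS k H) ≠ 0) :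
    ∃ n : ℕ, ∀ k ∈ K,
      (H ⊓ conjS k H).relIndex H ≤ n ∧ (H ⊓ conjS k⁻¹ H).relIndex H ≤ n := by
  have := isCompact_iff_compactSpace.mp hK
  have hfin : ∀ k ∈ K, conjIndex H k ≠ 0 := fun k hk => by
    simpa only [inf_relIndex_right, conjIndex] using (hcomm k hk).1
  let φ : K → ℕ := fun k => max (conjIndex H k) (conjIndex H k⁻¹)
  have hφ_closed : ∀ n, IsClosed {k | φ k ≤ n} := fun n => by
    convert ((isClosed_setOf_conjIndex_le hH n).inter ((isClosed_setOf_conjIndex_le hH n).preimage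
      continuous_inv)).preimage continuous_subtype_val using 1
    ext k
    simp [φ, hfin k k.2, hfin _ (inv_mem k.2)]
  have hφ_mul : ∀ a b, φ (a * b) ≤ φ a * φ b := fun a b => by
    simp only [φ, Subgroup.coe_mul, mul_inv_rev, max_le_iff]
    constructor
    · exact (conjIndex_mul_le (hfin a a.2) (hfin b b.2)).trans
        (Nat.mul_le_mul (le_max_left _ _) (le_max_left _ _))
    · exact (conjIndex_mul_le (hfin _ (inv_mem b.2)) (hfin _ (inv_mem a.2))).trans
        ((Nat.mul_le_mul (le_max_right _ _) (le_max_right _ _)).trans_eq (mul_comm _ _))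
  obtain ⟨N, hN⟩ := exists_forall_le_of_submultiplicative φ hφ_closed hφ_mul
  refine ⟨N, fun k hk => ?_⟩
  rw [inf_relIndex_left, inf_relIndex_left]
  exact max_le_iff.1 (hN ⟨k, hk⟩)

theorem stmt_5 {G : Type*} [Group G] [TopologicalSpace G] [IsTopologicalGroup G]
    [LocallyCompactSpace G] [T2Space G]
    (H K : Subgroup G) (hH : IsClosed (H : Set G)) (hK : IsCompact (K : Set G))
    (hcomm : ∀ k ∈ K, (conjS k H ⊓ H).relIndex H ≠ 0 ∧
      (conjS k H ⊓ H).relIndex (conjS k H) ≠ 0) :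
    ∃ n : ℕ, ∀ k ∈ K,
      (H ⊓ conjS k H).relIndex H ≤ n ∧ (H ⊓ conjS k⁻¹ H).relIndex H ≤ n :=
  stmt_5_general H K hH hK hcomm
end
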